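/- arXiv:1610.06894 — 3 statements merged into one kernel-verified Lean document; each statement's English description precedes it below -/
import Mathlib

section
/- Let $X$ be a Banach space, $D \subseteq X$ a subspace, $A : D \to X$ a linear operator, $\partial X$ another Banach space and $B : D \to \partial X$ a surjective linear operator. Let $A_0$ be the restriction of $A$ to $\ker B$. If $\lambda$ is in the resolvent set of $A_0$, then $D$ is the direct sum $D = D(A_0) \oplus \ker(\lambda - A)$, i.e. $D(A_0) \cap \ker(\lambda - A) = \{0\}$ and $D(A_0) + \ker(\lambda - A) = D$. -/
/-! Writing `T = λ - A : D → X`, the hypothesis says that `T` restricted to `ker B` is a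
bijection onto `X`. Injectivity of the restriction is `ker B ∩ ker T = 0`; surjectivity gives
`T (ker B) = X`, so every `u ∈ D` has some `v ∈ ker B` with `T v = T u`, and then
`u = v + (u - v)` with `u - v ∈ ker T`. -/

open Function

namespace LinearMap

variable {R M N : Type*} [Ring R] [AddCommGroup M] [Module R M] [AddCommGroup N] [Module R N]

theorem sup_ker_eq_top_of_surjective_domRestrict {f : M →ₗ[R] N} {p : Submodule R M}
    (h : Surjective (f.domRestrict p)) : p ⊔ ker f = ⊤ := by
  have hmap : p.map f = ⊤ := by rw [← range_domRestrict, range_eq_top.mpr h]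
  have hrange : range f = ⊤ := top_le_iff.mp (hmap ▸ map_le_range)
  exact (map_eq_top_iff hrange).mp hmap

theorem isCompl_ker_of_bijective_domRestrict {f : M →ₗ[R] N} {p : Submodule R M}
    (h : Bijective (f.domRestrict p)) : IsCompl p (ker f) :=
  ⟨injective_domRestrict_iff.mp h.1,
    codisjoint_iff.mpr (sup_ker_eq_top_of_surjective_domRestrict h.2)⟩

end LinearMap

theorem stmt0_general {X Y : Type*}
    [NormedAddCommGroup X] [NormedSpace ℂ X]
    [NormedAddCommGroup Y] [NormedSpace ℂ Y]
    (D : Submodule ℂ X) (A : D →ₗ[ℂ] X) (B : D →ₗ[ℂ] Y)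
    (l : ℂ)
    (hres : Function.Bijective fun u : LinearMap.ker B => l • ((u : D) : X) - A u) :
    LinearMap.ker B ⊓ LinearMap.ker (l • D.subtype - A) = ⊥ ∧
    LinearMap.ker B ⊔ LinearMap.ker (l • D.subtype - A) = ⊤ := by
  have hcompl : IsCompl (LinearMap.ker B) (LinearMap.ker (l • D.subtype - A)) :=
    LinearMap.isCompl_ker_of_bijective_domRestrict hres
  exact ⟨hcompl.inf_eq_bot, hcompl.sup_eq_top⟩

/-- Let `X` be a Banach space, `D ⊆ X` a subspace, `A : D → X` linear,
`∂X` another Banach space and `B : D → ∂X` a surjective linear operator. Let `A₀` be the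
restriction of `A` to `ker B`. If `λ ∈ ρ(A₀)` (i.e. `λ - A₀ : ker B → X` is bijective),
then `D = D(A₀) ⊕ ker (λ - A)`. -/
theorem stmt0 {X Y : Type*}
    [NormedAddCommGroup X] [NormedSpace ℂ X] [CompleteSpace X]
    [NormedAddCommGroup Y] [NormedSpace ℂ Y] [CompleteSpace Y]
    (D : Submodule ℂ X) (A : D →ₗ[ℂ] X) (B : D →ₗ[ℂ] Y)
    (hB : Function.Surjective B) (l : ℂ)
    (hres : Function.Bijective fun u : LinearMap.ker B => l • ((u : D) : X) - A u) :
    LinearMap.ker B ⊓ LinearMap.ker (l • D.subtype - A) = ⊥ ∧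
    LinearMap.ker B ⊔ LinearMap.ker (l • D.subtype - A) = ⊤ :=
  stmt0_general D A B l hres
end

section
/- In the setting of Greiner perturbation (Banach spaces $X$, $D \hookrightarrow X$, $\partial X$; continuous linear $A : D \to X$, surjective continuous $B : D \to \partial X$, continuous $\Phi : \overline{D} \to \partial X$; $A_0 = A|_{\ker B}$; $S_\lambda = (B|_{\ker(\lambda - A)})^{-1}$ for $\lambda \in \rho(A_0)$): if $\lambda \in \rho(A_0)$ and $I - S_\lambda \Phi$ is invertible as an operator on $\overline{D}$, then $\lambda \in \rho(A_\Phi)$ and $R(\lambda, A_\Phi) = (I - S_\lambda \Phi)^{-1} R(\lambda, A_0)$. -/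
/-!
Every `u ∈ D` splits as `u = R(λ, A₀)(λ - A)u + S_λ Bu` along `D = ker B ⊕ ker (λ - A)`. Hence
`u` solves `(λ - A)u = f`, `Bu = Φu` exactly when `u = R(λ, A₀)f + S_λ Φ u`, i.e. when
`(I - S_λ Φ)u = R(λ, A₀)f` in `\overline{D}`; invertibility of `I - S_λ Φ` gives existence,
uniqueness and the formula for the solution.
-/

section BoundaryProblem

variable {R D X Y E : Type*} [Ring R]
  [AddCommGroup D] [Module R D] [AddCommGroup X] [Module R X]
  [AddCommGroup Y] [Module R Y] [AddCommGroup E] [Module R E]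
  {L : D →ₗ[R] X} {B : D →ₗ[R] Y} {S : Y →ₗ[R] D} {R0 : X →ₗ[R] D}

theorem eq_resolvent_add_solutionOp (hS : ∀ h, L (S h) = 0 ∧ B (S h) = h)
    (hR0' : ∀ u, B u = 0 → R0 (L u) = u) (u : D) : u = R0 (L u) + S (B u) := by
  have hker : B (u - S (B u)) = 0 := by rw [map_sub, (hS _).2, sub_self]
  have hL : L (u - S (B u)) = L u := by rw [map_sub, (hS _).1, sub_zero]
  rw [← hL, hR0' _ hker, sub_add_cancel]

theorem resolvent_add_solutionOp_solves (hS : ∀ h, L (S h) = 0 ∧ B (S h) = h)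
    (hR0 : ∀ f, B (R0 f) = 0 ∧ L (R0 f) = f) (f : X) (h : Y) :
    B (R0 f + S h) = h ∧ L (R0 f + S h) = f := by
  rw [map_add, map_add, (hS h).1, (hS h).2, (hR0 f).1, (hR0 f).2, zero_add, add_zero]
  exact ⟨rfl, rfl⟩

theorem perturbed_solves_iff (hS : ∀ h, L (S h) = 0 ∧ B (S h) = h)
    (hR0 : ∀ f, B (R0 f) = 0 ∧ L (R0 f) = f) (hR0' : ∀ u, B u = 0 → R0 (L u) = u)
    (j : D →ₗ[R] E) (Φ : E →ₗ[R] Y) (f : X) (u : D) :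
    (B u = Φ (j u) ∧ L u = f) ↔ u = R0 f + S (Φ (j u)) := by
  constructor
  · rintro ⟨hBu, rfl⟩
    rw [← hBu]
    exact eq_resolvent_add_solutionOp hS hR0' u
  · intro hu
    have := resolvent_add_solutionOp_solves hS hR0 f (Φ (j u))
    rwa [← hu] at this

end BoundaryProblem

section FixedPoint

variable {R D Y E : Type*} [Ring R]
  [AddCommGroup D] [Module R D]
  [AddCommGroup Y] [Module R Y] [AddCommGroup E] [Module R E]
  {S : Y →ₗ[R] D} {j : D →ₗ[R] E} {Φ : E →ₗ[R] Y} {U : E → E}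

theorem apply_eq_of_eq_add_solutionOp (hU1 : ∀ e, U (e - j (S (Φ e))) = e) {v u : D}
    (hu : u = v + S (Φ (j u))) : j u = U (j v) := by
  have : j u - j (S (Φ (j u))) = j v := sub_eq_of_eq_add (by rw [← map_add, ← hu])
  rw [← this, hU1]

theorem apply_add_solutionOp_eq (hU2 : ∀ e, U e - j (S (Φ (U e))) = e) (v : D) :
    j (v + S (Φ (U (j v)))) = U (j v) := by
  rw [map_add]
  exact eq_sub_iff_add_eq.mp (hU2 (j v)).symm

end FixedPoint

theorem stmt3_general {X D Y : Type*}
    [NormedAddCommGroup X] [NormedSpace ℂ X]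
    [NormedAddCommGroup D] [NormedSpace ℂ D]
    [NormedAddCommGroup Y] [NormedSpace ℂ Y]
    (ι : D →L[ℂ] X)
    (A : D →L[ℂ] X) (B : D →L[ℂ] Y)
    (E : Submodule ℂ X)
    (hmem : ∀ u : D, ι u ∈ E)
    (Φ : E →L[ℂ] Y) (l : ℂ)
    (S : Y →L[ℂ] D)
    (hS : ∀ h : Y, l • ι (S h) - A (S h) = 0 ∧ B (S h) = h)
    (R0 : X →L[ℂ] D)
    (hR0 : ∀ f : X, B (R0 f) = 0 ∧ l • ι (R0 f) - A (R0 f) = f)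
    (hR0' : ∀ u : D, B u = 0 → R0 (l • ι u - A u) = u)
    (U : E →L[ℂ] E)
    (hU1 : ∀ e : E, U (e - ⟨ι (S (Φ e)), hmem _⟩) = e)
    (hU2 : ∀ e : E, U e - ⟨ι (S (Φ (U e))), hmem _⟩ = e) :
    (∀ f : X, ∃! u : D, B u = Φ ⟨ι u, hmem u⟩ ∧ l • ι u - A u = f) ∧
    (∀ (f : X) (u : D), B u = Φ ⟨ι u, hmem u⟩ → l • ι u - A u = f →
      (ι u : X) = (U ⟨ι (R0 f), hmem _⟩ : X)) := by
  let L : D →ₗ[ℂ] X := l • (ι : D →ₗ[ℂ] X) - A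
  let j : D →ₗ[ℂ] E := (ι : D →ₗ[ℂ] X).codRestrict E hmem
  have solves_iff (f : X) (u : D) :=
    perturbed_solves_iff (L := L) (B := B) (S := S) (R0 := R0) hS hR0 hR0' j
      (Φ : E →ₗ[ℂ] Y) f u
  have apply_eq (f : X) (u : D) (hu : u = R0 f + S (Φ (j u))) : j u = U (j (R0 f)) :=
    apply_eq_of_eq_add_solutionOp (S := (S : Y →ₗ[ℂ] D)) (Φ := (Φ : E →ₗ[ℂ] Y)) hU1 hu
  refine ⟨fun f => ⟨R0 f + S (Φ (U (j (R0 f)))), ?_, fun v hv => ?_⟩,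
    fun f u hBu hLu => congrArg Subtype.val (apply_eq f u ((solves_iff f u).1 ⟨hBu, hLu⟩))⟩
  · have hj : j (R0 f + S (Φ (U (j (R0 f))))) = U (j (R0 f)) :=
      apply_add_solutionOp_eq (S := (S : Y →ₗ[ℂ] D)) (Φ := (Φ : E →ₗ[ℂ] Y)) hU2 _
    refine (solves_iff f _).2 ?_
    rw [hj]
    rfl
  · have hv := (solves_iff f v).1 hv
    rwa [← apply_eq f v hv]

/-- Greiner setting: if `λ ∈ ρ(A₀)` (with resolvent `R₀ = R(λ,A₀)` and
solution operator `S = S_λ`) and `I - S_λΦ` is invertible on `E = \overline{D}` with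
inverse `U`, then `λ ∈ ρ(A_Φ)` and `R(λ, A_Φ) = (I - S_λΦ)⁻¹ R(λ, A₀)`. -/
theorem stmt3 {X D Y : Type*}
    [NormedAddCommGroup X] [NormedSpace ℂ X] [CompleteSpace X]
    [NormedAddCommGroup D] [NormedSpace ℂ D] [CompleteSpace D]
    [NormedAddCommGroup Y] [NormedSpace ℂ Y] [CompleteSpace Y]
    (ι : D →L[ℂ] X) (hι : Function.Injective ι)
    (A : D →L[ℂ] X) (B : D →L[ℂ] Y) (hB : Function.Surjective B)
    (E : Submodule ℂ X)
    (hE : E = (LinearMap.range (ι : D →ₗ[ℂ] X)).topologicalClosure)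
    (hmem : ∀ u : D, ι u ∈ E)
    (Φ : E →L[ℂ] Y) (l : ℂ)
    (S : Y →L[ℂ] D)
    (hS : ∀ h : Y, l • ι (S h) - A (S h) = 0 ∧ B (S h) = h)
    (R0 : X →L[ℂ] D)
    (hR0 : ∀ f : X, B (R0 f) = 0 ∧ l • ι (R0 f) - A (R0 f) = f)
    (hR0' : ∀ u : D, B u = 0 → R0 (l • ι u - A u) = u)
    (U : E →L[ℂ] E)
    (hU1 : ∀ e : E, U (e - ⟨ι (S (Φ e)), hmem _⟩) = e)
    (hU2 : ∀ e : E, U e - ⟨ι (S (Φ (U e))), hmem _⟩ = e) :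
    (∀ f : X, ∃! u : D, B u = Φ ⟨ι u, hmem u⟩ ∧ l • ι u - A u = f) ∧
    (∀ (f : X) (u : D), B u = Φ ⟨ι u, hmem u⟩ → l • ι u - A u = f →
      (ι u : X) = (U ⟨ι (R0 f), hmem _⟩ : X)) :=
  stmt3_general ι A B E hmem Φ l S hS R0 hR0 hR0' U hU1 hU2
end

section
/- In the Greiner perturbation setting, suppose additionally that $A_0$ generates a holomorphic semigroup, so that $M := \sup_{\Re\lambda > \rho} \|\lambda R(\lambda, A_0)\| < \infty$ for some $\rho$, and suppose that for all $\lambda$ with $\Re\lambda > \rho$ the operator $I - S_\lambda \Phi$ is invertible on $\overline{D}$ with $C := \sup_{\Re\lambda > \rho} \|(I - S_\lambda \Phi)^{-1}\| < \infty$. Then $\sup_{\Re\lambda > \rho} \|\lambda R(\lambda, A_\Phi)\| \leq C M < \infty$; in particular $A_\Phi$ generates a holomorphic semigroup on $X$. -/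
/-!
Every solution `u` of `(λ - A) u = f` splits as `u = R(λ, A₀) f + S_λ (B u)`. Imposing the
boundary condition `B u = Φ u` turns this into `(I - S_λ Φ) u = R(λ, A₀) f` in `E`, so
`u = (I - S_λ Φ)⁻¹ R(λ, A₀) f`; this gives existence, uniqueness and the bound
`‖λ u‖ ≤ C ‖λ R(λ, A₀) f‖ ≤ C M ‖f‖`.
-/

namespace Greiner

variable {𝕜 X D Y : Type*} [NormedField 𝕜]
  [NormedAddCommGroup X] [NormedSpace 𝕜 X] [NormedAddCommGroup D] [NormedSpace 𝕜 D]
  [NormedAddCommGroup Y] [NormedSpace 𝕜 Y]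
  (ι A : D →L[𝕜] X) (B : D →L[𝕜] Y) {E : Submodule 𝕜 X} (hmem : ∀ u, ι u ∈ E)
  (Φ : E →L[𝕜] Y) (l : 𝕜) {R : X →L[𝕜] D} {S : Y →L[𝕜] D} {U : E →L[𝕜] E}

/-- `u ∈ D(A_Φ)` and `(λ - A_Φ) u = f`. -/
def IsSolution (f : X) (u : D) : Prop :=
  B u = Φ ⟨ι u, hmem u⟩ ∧ l • ι u - A u = f

variable {ι A B l}

theorem eq_resolvent_add_solutionOp (hR : ∀ u, B u = 0 → R (l • ι u - A u) = u)
    (hSA : ∀ h, l • ι (S h) - A (S h) = 0) (hSB : ∀ h, B (S h) = h) {f : X} {u : D}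
    (hu : l • ι u - A u = f) : u = R f + S (B u) := by
  have hBw : B (u - S (B u)) = 0 := by rw [map_sub, hSB, sub_self]
  have hAw : l • ι (u - S (B u)) - A (u - S (B u)) = f := by
    rw [map_sub, map_sub, smul_sub, sub_sub_sub_comm, hSA, sub_zero, hu]
  rw [← hAw, hR _ hBw, sub_add_cancel]

theorem mk_eq_apply_resolvent (hR : ∀ u, B u = 0 → R (l • ι u - A u) = u)
    (hSA : ∀ h, l • ι (S h) - A (S h) = 0) (hSB : ∀ h, B (S h) = h)
    (hU : ∀ e, U (e - ⟨ι (S (Φ e)), hmem _⟩) = e) {f : X} {u : D}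
    (hu : IsSolution ι A B hmem Φ l f u) :
    (⟨ι u, hmem u⟩ : E) = U ⟨ι (R f), hmem _⟩ := by
  have hdecomp := eq_resolvent_add_solutionOp hR hSA hSB hu.2
  have hsub : (⟨ι u, hmem u⟩ : E) - ⟨ι (S (Φ ⟨ι u, hmem u⟩)), hmem _⟩ = ⟨ι (R f), hmem _⟩ := by
    ext
    change ι u - ι (S (Φ ⟨ι u, hmem u⟩)) = ι (R f)
    rw [← hu.1, ← map_sub, sub_eq_of_eq_add hdecomp]
  rw [← hsub, hU]

theorem isSolution_resolvent_add (hRB : ∀ f, B (R f) = 0) (hRA : ∀ f, l • ι (R f) - A (R f) = f)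
    (hSA : ∀ h, l • ι (S h) - A (S h) = 0) (hSB : ∀ h, B (S h) = h)
    (hU : ∀ e, U e - ⟨ι (S (Φ (U e))), hmem _⟩ = e) (f : X) :
    IsSolution ι A B hmem Φ l f (R f + S (Φ (U ⟨ι (R f), hmem _⟩))) := by
  set e := U ⟨ι (R f), hmem _⟩
  have he : (⟨ι (R f + S (Φ e)), hmem _⟩ : E) = e := by
    have hval : (e : X) - ι (S (Φ e)) = ι (R f) := congrArg Subtype.val (hU _)
    ext
    change ι (R f + S (Φ e)) = (e : X)
    rw [map_add, ← hval, sub_add_cancel]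
  refine ⟨by rw [he, map_add, hRB, hSB, zero_add], ?_⟩
  calc l • ι (R f + S (Φ e)) - A (R f + S (Φ e))
      = (l • ι (R f) - A (R f)) + (l • ι (S (Φ e)) - A (S (Φ e))) := by
        rw [map_add, map_add, smul_add, add_sub_add_comm]
    _ = f := by rw [hRA, hSA, add_zero]

theorem existsUnique_isSolution (hRB : ∀ f, B (R f) = 0) (hRA : ∀ f, l • ι (R f) - A (R f) = f)
    (hR : ∀ u, B u = 0 → R (l • ι u - A u) = u)
    (hSA : ∀ h, l • ι (S h) - A (S h) = 0) (hSB : ∀ h, B (S h) = h)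
    (hU₁ : ∀ e, U (e - ⟨ι (S (Φ e)), hmem _⟩) = e)
    (hU₂ : ∀ e, U e - ⟨ι (S (Φ (U e))), hmem _⟩ = e) (f : X) :
    ∃! u, IsSolution ι A B hmem Φ l f u := by
  refine ⟨_, isSolution_resolvent_add hmem Φ hRB hRA hSA hSB hU₂ f, fun u hu => ?_⟩
  rw [eq_resolvent_add_solutionOp hR hSA hSB hu.2, hu.1,
    mk_eq_apply_resolvent hmem Φ hR hSA hSB hU₁ hu]

theorem norm_mul_norm_le (hι : Function.Injective ι) (hRA : ∀ f, l • ι (R f) - A (R f) = f)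
    (hR : ∀ u, B u = 0 → R (l • ι u - A u) = u)
    (hSA : ∀ h, l • ι (S h) - A (S h) = 0) (hSB : ∀ h, B (S h) = h)
    (hU : ∀ e, U (e - ⟨ι (S (Φ e)), hmem _⟩) = e)
    {M C : ℝ} (hM : ∀ f, ‖l‖ * ‖ι (R f)‖ ≤ M * ‖f‖) (hC : ∀ e, ‖U e‖ ≤ C * ‖e‖)
    {f : X} {u : D} (hu : IsSolution ι A B hmem Φ l f u) :
    ‖l‖ * ‖ι u‖ ≤ C * M * ‖f‖ := by
  have hbound : ‖ι u‖ ≤ C * ‖ι (R f)‖ := by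
    have h := hC ⟨ι (R f), hmem _⟩
    rwa [← mk_eq_apply_resolvent hmem Φ hR hSA hSB hU hu] at h
  rcases le_or_gt 0 C with hC₀ | hC₀
  · calc ‖l‖ * ‖ι u‖ ≤ ‖l‖ * (C * ‖ι (R f)‖) := by gcongr
      _ = C * (‖l‖ * ‖ι (R f)‖) := by ring
      _ ≤ C * (M * ‖f‖) := mul_le_mul_of_nonneg_left (hM f) hC₀
      _ = C * M * ‖f‖ := by ring
  · -- a negative `C` forces `E = 0`, hence `R f = 0` and `f = 0`
    have hRf : ι (R f) = 0 :=
      norm_le_zero_iff.1 (nonpos_of_mul_nonneg_right ((norm_nonneg _).trans hbound) hC₀)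
    have hf : f = 0 := by
      rw [← hRA f, hι (hRf.trans (map_zero ι).symm), map_zero, map_zero, smul_zero, sub_zero]
    rw [hRf, norm_zero, mul_zero] at hbound
    rw [norm_le_zero_iff.1 hbound, hf]
    simp

end Greiner

theorem stmt4_general {X D Y : Type*}
    [NormedAddCommGroup X] [NormedSpace ℂ X]
    [NormedAddCommGroup D] [NormedSpace ℂ D]
    [NormedAddCommGroup Y] [NormedSpace ℂ Y]
    (ι : D →L[ℂ] X) (hι : Function.Injective ι)
    (A : D →L[ℂ] X) (B : D →L[ℂ] Y)
    (E : Submodule ℂ X)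
    (hmem : ∀ u : D, ι u ∈ E)
    (Φ : E →L[ℂ] Y) (ρ M C : ℝ)
    (R0 : ℂ → X →L[ℂ] D)
    (hR0 : ∀ l : ℂ, ρ < l.re → ∀ f : X,
      B (R0 l f) = 0 ∧ l • ι (R0 l f) - A (R0 l f) = f)
    (hR0' : ∀ l : ℂ, ρ < l.re → ∀ u : D, B u = 0 → R0 l (l • ι u - A u) = u)
    (hM : ∀ l : ℂ, ρ < l.re → ∀ f : X, ‖l‖ * ‖ι (R0 l f)‖ ≤ M * ‖f‖)
    (S : ℂ → Y →L[ℂ] D)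
    (hS : ∀ l : ℂ, ρ < l.re → ∀ h : Y,
      l • ι (S l h) - A (S l h) = 0 ∧ B (S l h) = h)
    (U : ℂ → E →L[ℂ] E)
    (hU1 : ∀ l : ℂ, ρ < l.re → ∀ e : E, U l (e - ⟨ι (S l (Φ e)), hmem _⟩) = e)
    (hU2 : ∀ l : ℂ, ρ < l.re → ∀ e : E, U l e - ⟨ι (S l (Φ (U l e))), hmem _⟩ = e)
    (hC : ∀ l : ℂ, ρ < l.re → ∀ e : E, ‖U l e‖ ≤ C * ‖e‖) :
    ∀ l : ℂ, ρ < l.re →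
      (∀ f : X, ∃! u : D, B u = Φ ⟨ι u, hmem u⟩ ∧ l • ι u - A u = f) ∧
      (∀ (f : X) (u : D), B u = Φ ⟨ι u, hmem u⟩ → l • ι u - A u = f →
        ‖l‖ * ‖ι u‖ ≤ C * M * ‖f‖) := by
  intro l hl
  have hRB := fun f => (hR0 l hl f).1
  have hRA := fun f => (hR0 l hl f).2
  have hSA := fun h => (hS l hl h).1
  have hSB := fun h => (hS l hl h).2
  exact ⟨Greiner.existsUnique_isSolution hmem Φ hRB hRA (hR0' l hl) hSA hSB (hU1 l hl) (hU2 l hl),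
    fun f u hB hf => Greiner.norm_mul_norm_le hmem Φ hι hRA (hR0' l hl) hSA hSB (hU1 l hl)
      (hM l hl) (hC l hl) ⟨hB, hf⟩⟩

/-- Greiner setting.  Suppose `A₀` generates a holomorphic semigroup, so
that `‖λ R(λ,A₀)‖ ≤ M` on the half-plane `Re λ > ρ`, and that for all such `λ` the operator
`I - S_λΦ` is invertible on `E = \overline{D}` with `‖(I - S_λΦ)⁻¹‖ ≤ C`.  Then for every
`λ` with `Re λ > ρ` one has `λ ∈ ρ(A_Φ)` and `‖λ R(λ, A_Φ)‖ ≤ C·M`; in particular `A_Φ`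
generates a holomorphic semigroup on `X`. -/
theorem stmt4 {X D Y : Type*}
    [NormedAddCommGroup X] [NormedSpace ℂ X] [CompleteSpace X]
    [NormedAddCommGroup D] [NormedSpace ℂ D] [CompleteSpace D]
    [NormedAddCommGroup Y] [NormedSpace ℂ Y] [CompleteSpace Y]
    (ι : D →L[ℂ] X) (hι : Function.Injective ι)
    (A : D →L[ℂ] X) (B : D →L[ℂ] Y) (hB : Function.Surjective B)
    (E : Submodule ℂ X)
    (hE : E = (LinearMap.range (ι : D →ₗ[ℂ] X)).topologicalClosure)
    (hmem : ∀ u : D, ι u ∈ E)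
    (Φ : E →L[ℂ] Y) (ρ M C : ℝ)
    (R0 : ℂ → X →L[ℂ] D)
    (hR0 : ∀ l : ℂ, ρ < l.re → ∀ f : X,
      B (R0 l f) = 0 ∧ l • ι (R0 l f) - A (R0 l f) = f)
    (hR0' : ∀ l : ℂ, ρ < l.re → ∀ u : D, B u = 0 → R0 l (l • ι u - A u) = u)
    (hM : ∀ l : ℂ, ρ < l.re → ∀ f : X, ‖l‖ * ‖ι (R0 l f)‖ ≤ M * ‖f‖)
    (S : ℂ → Y →L[ℂ] D)
    (hS : ∀ l : ℂ, ρ < l.re → ∀ h : Y,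
      l • ι (S l h) - A (S l h) = 0 ∧ B (S l h) = h)
    (U : ℂ → E →L[ℂ] E)
    (hU1 : ∀ l : ℂ, ρ < l.re → ∀ e : E, U l (e - ⟨ι (S l (Φ e)), hmem _⟩) = e)
    (hU2 : ∀ l : ℂ, ρ < l.re → ∀ e : E, U l e - ⟨ι (S l (Φ (U l e))), hmem _⟩ = e)
    (hC : ∀ l : ℂ, ρ < l.re → ∀ e : E, ‖U l e‖ ≤ C * ‖e‖) :
    ∀ l : ℂ, ρ < l.re →
      (∀ f : X, ∃! u : D, B u = Φ ⟨ι u, hmem u⟩ ∧ l • ι u - A u = f) ∧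
      (∀ (f : X) (u : D), B u = Φ ⟨ι u, hmem u⟩ → l • ι u - A u = f →
        ‖l‖ * ‖ι u‖ ≤ C * M * ‖f‖) :=
  stmt4_general ι hι A B E hmem Φ ρ M C R0 hR0 hR0' hM S hS U hU1 hU2 hC
end
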